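/- Let (G, 𝒫, 𝒯) be an instance of Partitioned Vertex Cover with solution U, let H be the Popular Matching instance constructed from (G, 𝒫, 𝒯), and let M* be the matching in H constructed from U. If S is an alternating path in H_{M*} containing at least two edges labeled +2 by label_{M*} and of minimum length (number of edges) among all such alternating paths, then S does not contain the vertex u^e_i for any edge e of G and endpoint i of e. -/

import Mathlib

/-!
Every `u^e_i` has exactly two neighbours in `H`: its `M*`-partner `u^e_j`, which is its first
choice, and `b_i`. Hence no edge at a `u`-vertex is labeled `+2`, and if `i ∈ U` then `b_i`,
matched to its first choice `a_i`, makes `{b_i, u^e_i}` a `−2` edge, absent from `H_{M*}`.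

A shortest `S` cannot have a `u`-vertex `u^e_i` as an endpoint: the two edges of `S` at that end
would be the matching edge `{u^e_i, u^e_j}` (the end edge of an alternating path at a matched
vertex is a matching edge) and another edge at `u^e_j`, neither labeled `+2`, and cutting them
off leaves a shorter alternating path with the same `+2` edges. So every `u^e_i` on `S` is
interior and needs both of its neighbours on `S`: then `i ∉ U`, and `u^e_j` lies on `S` as well,
so also `j ∉ U`, contradicting that `U` covers `e`.
-/

open SimpleGraph

universe u

/-- A matching: a set of edges of `G` that are pairwise vertex-disjoint. -/
def IsMatching {W : Type u} (G : SimpleGraph W) (M : Set (Sym2 W)) : Prop :=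
  M ⊆ G.edgeSet ∧ ∀ e ∈ M, ∀ e' ∈ M, e ≠ e' → ∀ v : W, v ∈ e → v ∉ e'

/-- `v` is matched by `M`. -/
def Matched {W : Type u} (M : Set (Sym2 W)) (v : W) : Prop := ∃ w : W, s(v, w) ∈ M

open scoped Classical in
/-- `rank G pref M v = pref v (M(v))`, with the convention `|N(v)|+1` if `v` is unmatched. -/
noncomputable def rank {W : Type u} (G : SimpleGraph W) (pref : W → W → ℕ)
    (M : Set (Sym2 W)) (v : W) : ℕ :=
  if h : ∃ w : W, s(v, w) ∈ M then pref v h.choose else (G.neighborSet v).ncard + 1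

/-- The number of vertices preferring `M` over `M'`. -/
noncomputable def vote {W : Type u} (G : SimpleGraph W) (pref : W → W → ℕ)
    (M M' : Set (Sym2 W)) : ℕ :=
  {v : W | rank G pref M v < rank G pref M' v}.ncard

/-- A popular matching: no other matching is more popular. -/
def IsPopular {W : Type u} (G : SimpleGraph W) (pref : W → W → ℕ) (M : Set (Sym2 W)) : Prop :=
  IsMatching G M ∧
    ∀ M' : Set (Sym2 W), IsMatching G M' → vote G pref M' M ≤ vote G pref M M'

/-- Each vertex has a strict preference list: `pref v` is a bijection from the
neighborhood of `v` onto `{1, …, |N(v)|}`. -/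
def HasPref {W : Type u} (G : SimpleGraph W) (pref : W → W → ℕ) : Prop :=
  ∀ v : W, Set.BijOn (pref v) (G.neighborSet v) (Set.Icc 1 (G.neighborSet v).ncard)

/-- The edge `e ∉ M` is labeled `+2` by `label_M` (given rank function `rk`):
both endpoints prefer each other over their status in `M`. -/
def EdgePlus {W : Type u} (pref : W → W → ℕ) (rk : W → ℕ) (e : Sym2 W) : Prop :=
  ∃ x y : W, e = s(x, y) ∧ pref x y < rk x ∧ pref y x < rk y

/-- The edge `e ∉ M` is labeled `-2` by `label_M` (given rank function `rk`):
both endpoints prefer their status in `M` over each other. -/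
def EdgeMinus {W : Type u} (pref : W → W → ℕ) (rk : W → ℕ) (e : Sym2 W) : Prop :=
  ∃ x y : W, e = s(x, y) ∧ rk x < pref x y ∧ rk y < pref y x

/-- The graph `G_M`: the spanning subgraph of `G` consisting of the edges of `M`
together with the edges not labeled `-2`. -/
def GMgraph {W : Type u} (G : SimpleGraph W) (pref : W → W → ℕ) (M : Set (Sym2 W)) :
    SimpleGraph W where
  Adj x y := G.Adj x y ∧ (s(x, y) ∈ M ∨ ¬ EdgeMinus pref (rank G pref M) s(x, y))
  symm := by
    constructor
    intro x y h
    refine ⟨h.1.symm, ?_⟩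
    rw [Sym2.eq_swap]
    exact h.2
  loopless := ⟨fun x h => G.loopless.1 x h.1⟩

/-- Consecutive edges alternate between `M` and non-`M`. -/
def altRel {W : Type u} (M : Set (Sym2 W)) (e e' : Sym2 W) : Prop := e ∈ M ↔ e' ∉ M

/-- An alternating path (with respect to `M`) in a graph `G'`. -/
def IsAltPath {W : Type u} (M : Set (Sym2 W)) {G' : SimpleGraph W} {x y : W}
    (p : G'.Walk x y) : Prop :=
  p.IsPath ∧ List.Chain' (altRel M) p.edges ∧
    (∀ e, p.edges.head? = some e → e ∉ M → ¬ Matched M x) ∧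
    (∀ e, p.edges.getLast? = some e → e ∉ M → ¬ Matched M y)

/-- An alternating cycle (with respect to `M`) in a graph `G'`:
the edges alternate cyclically between `M` and non-`M`. -/
def IsAltCycle {W : Type u} (M : Set (Sym2 W)) {G' : SimpleGraph W} {x : W}
    (p : G'.Walk x x) : Prop :=
  p.IsCycle ∧ List.Chain' (altRel M) (p.edges ++ p.edges.take 1)

/-- `l` contains at least one edge labeled `+2`. -/
def OnePlusEdge {W : Type u} (pref : W → W → ℕ) (rk : W → ℕ) (l : List (Sym2 W)) : Prop :=
  ∃ e ∈ l, EdgePlus pref rk e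

/-- `l` contains at least two edges labeled `+2`. -/
def TwoPlusEdges {W : Type u} (pref : W → W → ℕ) (rk : W → ℕ) (l : List (Sym2 W)) : Prop :=
  ∃ e ∈ l, ∃ e' ∈ l, e ≠ e' ∧ EdgePlus pref rk e ∧ EdgePlus pref rk e'

/-- A vertex cover. -/
def IsVC {V : Type u} (G : SimpleGraph V) (U : Set V) : Prop :=
  ∀ ⦃x y : V⦄, G.Adj x y → x ∈ U ∨ y ∈ U
/-- An instance of Partitioned Vertex Cover: `G` is a finite simple graph, `P` is a
collection of pairwise disjoint edges of `G`, `T` is a collection of pairwise disjoint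
3-element vertex sets each inducing a triangle in `G`, and every vertex of `G` lies in
exactly one member of `P ∪ T`. -/
def IsPVC {V : Type u} (G : SimpleGraph V) (P : Set (Sym2 V)) (T : Set (Finset V)) : Prop :=
  Finite V ∧
  P ⊆ G.edgeSet ∧
  (∀ e ∈ P, ∀ e' ∈ P, e ≠ e' → ∀ v : V, v ∈ e → v ∉ e') ∧
  (∀ t ∈ T, t.card = 3) ∧
  (∀ t ∈ T, ∀ x ∈ t, ∀ y ∈ t, x ≠ y → G.Adj x y) ∧
  (∀ t ∈ T, ∀ t' ∈ T, t ≠ t' → ∀ v : V, v ∈ t → v ∉ t') ∧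
  (∀ v : V, (∃ e ∈ P, v ∈ e) ∨ (∃ t ∈ T, v ∈ t)) ∧
  (∀ v : V, ¬ ((∃ e ∈ P, v ∈ e) ∧ (∃ t ∈ T, v ∈ t)))

/-- A solution of a Partitioned Vertex Cover instance: a vertex cover `U` with
`|U ∩ P| = 1` for every pair `P` and `|U ∩ T| = 2` for every triple `T`. -/
def IsPVCSolution {V : Type u} (G : SimpleGraph V) (P : Set (Sym2 V)) (T : Set (Finset V))
    (U : Set V) : Prop :=
  IsVC G U ∧
  (∀ e ∈ P, {x : V | x ∈ e ∧ x ∈ U}.ncard = 1) ∧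
  (∀ t ∈ T, {x : V | x ∈ t ∧ x ∈ U}.ncard = 2)

/-- The vertices of the graph `H` built from a Partitioned Vertex Cover instance:
`a i`, `b i`, `c i`, `d i` for a vertex `i` of `G`; `u i j` is the vertex `u^e_i` for the
edge `e = {i,j}` of `G`; `f i j` is the vertex `f_{ij}` for the pair `{i,j} ∈ P`. -/
inductive Gad (V : Type u) : Type u where
  | a : V → Gad V
  | b : V → Gad V
  | c : V → Gad V
  | d : V → Gad V
  | u : V → V → Gad V
  | f : V → V → Gad V
deriving DecidableEq

/-- Which formal gadget vertices are really vertices of `H`. -/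
def Gad.valid {V : Type u} (G : SimpleGraph V) (P : Set (Sym2 V)) : Gad V → Prop
  | .u i j => G.Adj i j
  | .f i j => s(i, j) ∈ P
  | _ => True

/-- The edges of `H`, up to symmetry. -/
inductive HBase {V : Type u} (G : SimpleGraph V) (P : Set (Sym2 V)) (T : Set (Finset V)) :
    Gad V → Gad V → Prop where
  | da (i : V) : HBase G P T (.d i) (.a i)
  | ab (i : V) : HBase G P T (.a i) (.b i)
  | ac (i : V) : HBase G P T (.a i) (.c i)
  | bc (i : V) : HBase G P T (.b i) (.c i)
  | uu {i j : V} (h : G.Adj i j) : HBase G P T (.u i j) (.u j i)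
  | bu {i j : V} (h : G.Adj i j) : HBase G P T (.b i) (.u i j)
  | df {i j : V} (h : s(i, j) ∈ P) : HBase G P T (.d i) (.f i j)
  | fc {i j : V} (h : s(i, j) ∈ P) : HBase G P T (.f i j) (.c j)
  | cd {i j : V} (h : s(i, j) ∈ P) : HBase G P T (.c i) (.d j)
  | dd {i j : V} {t : Finset V} (ht : t ∈ T) (hi : i ∈ t) (hj : j ∈ t) (hne : i ≠ j) :
      HBase G P T (.d i) (.d j)
  | cc {i j : V} {t : Finset V} (ht : t ∈ T) (hi : i ∈ t) (hj : j ∈ t) (hne : i ≠ j) :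
      HBase G P T (.c i) (.c j)

/-- The graph `H` of the Popular Matching instance built from `(G, P, T)`. -/
def Hgraph {V : Type u} (G : SimpleGraph V) (P : Set (Sym2 V)) (T : Set (Finset V)) :
    SimpleGraph {g : Gad V // Gad.valid G P g} where
  Adj x y := x ≠ y ∧ (HBase G P T x.1 y.1 ∨ HBase G P T y.1 x.1)
  symm := ⟨fun _ _ h => ⟨h.1.symm, h.2.symm⟩⟩
  loopless := ⟨fun _ h => h.1 rfl⟩

/-- The Popular Matching instance (graph together with preference lists) constructed
from a Partitioned Vertex Cover instance `(G, P, T)`.  The field `pref` gives the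
preference lists; all its values on the neighborhoods in `H` are pinned down, except
the ranks that `b i` assigns to the vertices `u^e_i`, which form an arbitrary fixed
bijection onto `{2, …, deg_G(i) + 1}`. -/
structure Reduction (V : Type u) [LinearOrder V] : Type u where
  G : SimpleGraph V
  P : Set (Sym2 V)
  T : Set (Finset V)
  ispvc : IsPVC G P T
  pref : Gad V → Gad V → ℕ
  pref_ab : ∀ i : V, pref (.a i) (.b i) = 1
  pref_ac : ∀ i : V, pref (.a i) (.c i) = 2
  pref_ad : ∀ i : V, pref (.a i) (.d i) = 3
  pref_ba : ∀ i : V, pref (.b i) (.a i) = 1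
  pref_bu : ∀ i : V, Set.BijOn (pref (.b i)) {g : Gad V | ∃ j : V, G.Adj i j ∧ g = .u i j}
      (Set.Icc 2 ((G.neighborSet i).ncard + 1))
  pref_bc : ∀ i : V, pref (.b i) (.c i) = (G.neighborSet i).ncard + 2
  pref_ca : ∀ i : V, pref (.c i) (.a i) = 1
  pref_cb : ∀ i : V, pref (.c i) (.b i) = 2
  pref_da : ∀ i : V, pref (.d i) (.a i) = 1
  pref_uu : ∀ i j : V, G.Adj i j → pref (.u i j) (.u j i) = 1
  pref_ub : ∀ i j : V, G.Adj i j → pref (.u i j) (.b i) = 2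
  pref_cf : ∀ i j : V, s(i, j) ∈ P → pref (.c i) (.f j i) = 3
  pref_cd : ∀ i j : V, s(i, j) ∈ P → pref (.c i) (.d j) = 4
  pref_dc : ∀ i j : V, s(i, j) ∈ P → pref (.d i) (.c j) = 2
  pref_df : ∀ i j : V, s(i, j) ∈ P → pref (.d i) (.f i j) = 3
  pref_fd : ∀ i j : V, s(i, j) ∈ P → pref (.f i j) (.d i) = 1
  pref_fc : ∀ i j : V, s(i, j) ∈ P → pref (.f i j) (.c j) = 2
  pref_tri : ∀ t ∈ T, ∀ i j k : V, t = {i, j, k} → i < j → j < k →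
    pref (.c i) (.c k) = 3 ∧ pref (.c i) (.c j) = 4 ∧
    pref (.c j) (.c i) = 3 ∧ pref (.c j) (.c k) = 4 ∧
    pref (.c k) (.c j) = 3 ∧ pref (.c k) (.c i) = 4 ∧
    pref (.d i) (.d j) = 2 ∧ pref (.d i) (.d k) = 3 ∧
    pref (.d j) (.d k) = 2 ∧ pref (.d j) (.d i) = 3 ∧
    pref (.d k) (.d i) = 2 ∧ pref (.d k) (.d j) = 3

namespace Reduction

variable {V : Type u} [LinearOrder V] (R : Reduction V)

/-- The vertex set of `H`. -/
abbrev HV : Type u := {g : Gad V // Gad.valid R.G R.P g}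

/-- The graph `H`. -/
def H : SimpleGraph R.HV := Hgraph R.G R.P R.T

/-- The preference lists of `H`, as a function on its vertices. -/
def prefH : R.HV → R.HV → ℕ := fun x y => R.pref x.1 y.1

/-- The vertex `a_i` of `H`. -/
def va (i : V) : R.HV := ⟨.a i, trivial⟩
/-- The vertex `b_i` of `H`. -/
def vb (i : V) : R.HV := ⟨.b i, trivial⟩
/-- The vertex `c_i` of `H`. -/
def vc (i : V) : R.HV := ⟨.c i, trivial⟩
/-- The vertex `d_i` of `H`. -/
def vd (i : V) : R.HV := ⟨.d i, trivial⟩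
/-- The vertex `u^e_i` of `H`, for an edge `e = {i,j}` of `G`. -/
def vu (i j : V) (h : R.G.Adj i j) : R.HV := ⟨.u i j, h⟩
/-- The vertex `f_{ij}` of `H`, for a pair `{i,j} ∈ P`. -/
def vf (i j : V) (h : s(i, j) ∈ R.P) : R.HV := ⟨.f i j, h⟩

/-- The matching `M*` in `H` constructed from a solution `U`. -/
def Mstar (U : Set V) : Set (Sym2 R.HV) :=
  {e : Sym2 R.HV |
    (∃ (i j : V) (h : R.G.Adj i j), e = s(R.vu i j h, R.vu j i h.symm)) ∨
    (∃ (x y : V) (h : s(x, y) ∈ R.P) (h' : s(y, x) ∈ R.P), x ∉ U ∧ y ∈ U ∧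
      (e = s(R.va x, R.vd x) ∨ e = s(R.vb x, R.vc x) ∨ e = s(R.va y, R.vb y) ∨
       e = s(R.vf x y h, R.vc y) ∨ e = s(R.vf y x h', R.vd y))) ∨
    (∃ t ∈ R.T, ∃ x y z : V, t = {x, y, z} ∧ x ∉ U ∧ y ∈ U ∧ z ∈ U ∧ y ≠ z ∧
      R.pref (.d x) (.d y) < R.pref (.d x) (.d z) ∧
      (e = s(R.va x, R.vd x) ∨ e = s(R.vb x, R.vc x) ∨ e = s(R.va y, R.vb y) ∨
       e = s(R.va z, R.vb z) ∨ e = s(R.vc y, R.vc z) ∨ e = s(R.vd y, R.vd z)))}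

end Reduction

/-- The vertex set of the Pair Selector gadget associated with a pair `{i,j}`. -/
def pairGadget {V : Type u} (i j : V) : Set (Gad V) :=
  {g : Gad V | ∃ x : V, (x = i ∨ x = j) ∧ (g = .a x ∨ g = .b x ∨ g = .c x ∨ g = .d x)} ∪
    {Gad.f i j, Gad.f j i}

/-- The vertex set of the Triple Selector gadget associated with a triple `t`. -/
def tripleGadget {V : Type u} (t : Finset V) : Set (Gad V) :=
  {g : Gad V | ∃ x ∈ t, g = .a x ∨ g = .b x ∨ g = .c x ∨ g = .d x}

section General

variable {W : Type u} {G : SimpleGraph W} {M : Set (Sym2 W)} {pref : W → W → ℕ} {rk : W → ℕ}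

theorem edgePlus_iff {v w : W} :
    EdgePlus pref rk s(v, w) ↔ pref v w < rk v ∧ pref w v < rk w := by
  refine ⟨fun ⟨x, y, he, hx, hy⟩ => ?_, fun h => ⟨v, w, rfl, h⟩⟩
  rcases Sym2.eq_iff.mp he with ⟨rfl, rfl⟩ | ⟨rfl, rfl⟩
  exacts [⟨hx, hy⟩, ⟨hy, hx⟩]

theorem TwoPlusEdges.mono {l l' : List (Sym2 W)} (h : TwoPlusEdges pref rk l) (hl : l ⊆ l') :
    TwoPlusEdges pref rk l' :=
  let ⟨e, he, e', he', hne, hp, hp'⟩ := h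
  ⟨e, hl he, e', hl he', hne, hp, hp'⟩

theorem TwoPlusEdges.of_cons {e : Sym2 W} {l : List (Sym2 W)}
    (h : TwoPlusEdges pref rk (e :: l)) (he : ¬ EdgePlus pref rk e) : TwoPlusEdges pref rk l := by
  obtain ⟨e₁, he₁, e₂, he₂, hne, hp₁, hp₂⟩ := h
  rcases List.mem_cons.mp he₁ with rfl | he₁
  · exact absurd hp₁ he
  rcases List.mem_cons.mp he₂ with rfl | he₂
  · exact absurd hp₂ he
  exact ⟨e₁, he₁, e₂, he₂, hne, hp₁, hp₂⟩

theorem rank_eq_of_mem {v w : W} (hw : s(v, w) ∈ M) (hunique : ∀ w', s(v, w') ∈ M → w' = w) :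
    rank G pref M v = pref v w := by
  have hex : ∃ w', s(v, w') ∈ M := ⟨w, hw⟩
  rw [rank, dif_pos hex, hunique _ hex.choose_spec]

theorem SimpleGraph.Walk.IsPath.exists_adj_adj_of_ne {x y v : W} {p : G.Walk x y}
    (hp : p.IsPath) (hv : v ∈ p.support) (hx : v ≠ x) (hy : v ≠ y) :
    ∃ w₁ w₂, w₁ ≠ w₂ ∧ G.Adj v w₁ ∧ G.Adj v w₂ ∧ w₁ ∈ p.support ∧ w₂ ∈ p.support := by
  obtain ⟨n, rfl, hn⟩ := Walk.mem_support_iff_exists_getVert.mp hv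
  have h0 : n ≠ 0 := by rintro rfl; exact hx p.getVert_zero
  have hlen : n < p.length := lt_of_le_of_ne hn (by rintro rfl; exact hy p.getVert_length)
  have hprev : G.Adj (p.getVert (n - 1)) (p.getVert n) := by
    simpa [Nat.sub_add_cancel (Nat.pos_of_ne_zero h0)] using
      p.adj_getVert_succ (i := n - 1) (by omega)
  refine ⟨p.getVert (n - 1), p.getVert (n + 1), fun h => ?_, hprev.symm,
    p.adj_getVert_succ hlen, p.getVert_mem_support _, p.getVert_mem_support _⟩
  have := hp.getVert_injOn (by simp; omega) (by simp; omega) h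
  omega

theorem IsAltPath.reverse {x y : W} {p : G.Walk x y} (hp : IsAltPath M p) :
    IsAltPath M p.reverse := by
  obtain ⟨hpath, hchain, hhead, hlast⟩ := hp
  refine ⟨hpath.reverse, ?_, ?_, ?_⟩
  · show List.IsChain _ _
    rw [Walk.edges_reverse, List.isChain_reverse]
    exact List.IsChain.imp (fun hab => by simp only [altRel] at *; tauto) hchain
  · intro e he
    rw [Walk.edges_reverse, List.head?_reverse] at he
    exact hlast e he
  · intro e he
    rw [Walk.edges_reverse, List.getLast?_reverse] at he
    exact hhead e he

theorem IsAltPath.of_cons_cons {x w₁ w₂ y : W} {h : G.Adj x w₁} {h' : G.Adj w₁ w₂}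
    {p : G.Walk w₂ y} (hp : IsAltPath M (.cons h (.cons h' p))) (hM : s(x, w₁) ∈ M) :
    IsAltPath M p := by
  obtain ⟨hpath, hchain, -, hlast⟩ := hp
  obtain ⟨halt, hchain⟩ :
      altRel M s(x, w₁) s(w₁, w₂) ∧ (s(w₁, w₂) :: p.edges).IsChain (altRel M) :=
    List.isChain_cons_cons.mp hchain
  have hw : s(w₁, w₂) ∉ M := halt.mp hM
  refine ⟨hpath.of_cons.of_cons, (List.isChain_cons.mp hchain).2, fun e he heM => ?_,
    fun e he => hlast e ?_⟩
  · exact absurd ((List.isChain_cons.mp hchain).1 e he) (by unfold altRel; tauto)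
  · rw [Walk.edges_cons, Walk.edges_cons]
    exact List.mem_getLast?_cons (List.mem_getLast?_cons he)

variable (M pref rk) in
def IsShortestTwoPlusAltPath {x y : W} (S : G.Walk x y) : Prop :=
  IsAltPath M S ∧ TwoPlusEdges pref rk S.edges ∧
    ∀ (x' y' : W) (S' : G.Walk x' y'), IsAltPath M S' → TwoPlusEdges pref rk S'.edges →
      S.length ≤ S'.length

theorem IsShortestTwoPlusAltPath.reverse {x y : W} {S : G.Walk x y}
    (hS : IsShortestTwoPlusAltPath M pref rk S) :
    IsShortestTwoPlusAltPath M pref rk S.reverse := by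
  obtain ⟨halt, htwo, hmin⟩ := hS
  refine ⟨halt.reverse, htwo.mono fun e he => ?_, fun x' y' S' h h' => ?_⟩
  · rwa [Walk.edges_reverse, List.mem_reverse]
  · rw [Walk.length_reverse]
    exact hmin x' y' S' h h'

theorem IsShortestTwoPlusAltPath.exists_edgePlus_of_matched {x y : W} {S : G.Walk x y}
    (hS : IsShortestTwoPlusAltPath M pref rk S) (hx : Matched M x) :
    ∃ w₁ w₂, G.Adj x w₁ ∧ G.Adj w₁ w₂ ∧ s(x, w₁) ∈ M ∧
      (EdgePlus pref rk s(x, w₁) ∨ EdgePlus pref rk s(w₁, w₂)) := by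
  obtain ⟨halt, htwo, hmin⟩ := hS
  match S, halt, htwo, hmin with
  | .nil, _, ⟨_, he, _⟩, _ => simp at he
  | .cons _ .nil, _, ⟨_, he, _, he', hne, _⟩, _ =>
    simp only [Walk.edges_cons, Walk.edges_nil, List.mem_singleton] at he he'
    exact absurd (he.trans he'.symm) hne
  | .cons (v := w₁) h (.cons (v := w₂) h' p), halt, htwo, hmin =>
    have hM : s(x, w₁) ∈ M := by
      by_contra hM
      exact halt.2.2.1 _ rfl hM hx
    refine ⟨w₁, w₂, h, h', hM, ?_⟩
    by_contra! hno
    have := hmin _ _ p (halt.of_cons_cons hM) ((htwo.of_cons hno.1).of_cons hno.2)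
    simp only [Walk.length_cons] at this
    omega

end General

theorem Finset.exists_lt_lt_eq_of_card_eq_three {α : Type u} [LinearOrder α] {t : Finset α}
    (h : t.card = 3) : ∃ a b c, a < b ∧ b < c ∧ t = {a, b, c} := by
  set f := t.orderEmbOfFin h
  refine ⟨f 0, f 1, f 2, f.strictMono (by decide), f.strictMono (by decide), ?_⟩
  ext v
  have hv : v ∈ t ↔ v ∈ Set.range f := by rw [Finset.range_orderEmbOfFin t h, Finset.mem_coe]
  rw [hv, Set.mem_range, Fin.exists_fin_succ, Fin.exists_fin_succ, Fin.exists_fin_one]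
  simp [eq_comm]

theorem Finset.exists_eq_triple_of_ncard_inter_eq_two {α : Type u} [DecidableEq α] {t : Finset α}
    {U : Set α} (ht : t.card = 3) (hU : {x | x ∈ t ∧ x ∈ U}.ncard = 2) :
    ∃ x y z, t = {x, y, z} ∧ x ∉ U ∧ y ∈ U ∧ z ∈ U ∧ y ≠ z := by
  obtain ⟨y, z, hyz, hyzU⟩ := Set.ncard_eq_two.mp hU
  have hy : y ∈ {x | x ∈ t ∧ x ∈ U} := by simp [hyzU]
  have hz : z ∈ {x | x ∈ t ∧ x ∈ U} := by simp [hyzU]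
  obtain ⟨x, hxt, hxU⟩ : ∃ x ∈ t, x ∉ U := by
    by_contra! hall
    have : {x | x ∈ t ∧ x ∈ U} = t := Set.ext fun x => ⟨fun h => h.1, fun h => ⟨h, hall x h⟩⟩
    rw [this, Set.ncard_coe_finset] at hU
    omega
  refine ⟨x, y, z, (Finset.eq_of_subset_of_card_le ?_ ?_).symm, hxU, hy.2, hz.2, hyz⟩
  · simp [Finset.insert_subset_iff, hxt, hy.1, hz.1]
  · rw [ht, Finset.card_insert_of_notMem, Finset.card_pair hyz]
    simp only [Finset.mem_insert, Finset.mem_singleton, not_or]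
    exact ⟨fun h => hxU (h ▸ hy.2), fun h => hxU (h ▸ hz.2)⟩

namespace Reduction

variable {V : Type u} [LinearOrder V] (R : Reduction V) (U : Set V)

theorem eq_or_eq_of_adj_vu {p q : V} (h : R.G.Adj p q) {w : R.HV}
    (hw : R.H.Adj (R.vu p q h) w) : w = R.vu q p h.symm ∨ w = R.vb p := by
  obtain ⟨g, hg⟩ := w
  obtain ⟨-, hb | hb⟩ := hw
  · cases hb
    exact Or.inl rfl
  · cases hb
    exacts [Or.inl rfl, Or.inr rfl]

theorem vu_mem_Mstar {p q : V} (h : R.G.Adj p q) : s(R.vu p q h, R.vu q p h.symm) ∈ R.Mstar U :=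
  Or.inl ⟨p, q, h, rfl⟩

theorem eq_vu_of_mem_Mstar {p q : V} (h : R.G.Adj p q) {w : R.HV}
    (hw : s(R.vu p q h, w) ∈ R.Mstar U) : w = R.vu q p h.symm := by
  simp only [Mstar, vu, va, vd, vb, vc, vf, exists_and_left, ↓existsAndEq, ne_eq, true_and,
    Set.mem_ofPred_eq, Sym2.eq, Sym2.rel_iff', Prod.mk.injEq, Subtype.ext_iff, Gad.u.injEq,
    Prod.swap_prod_mk, exists_prop, reduceCtorEq, false_and, or_self, exists_false, and_false,
    or_false] at hw
  grind [vu]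

theorem rank_vu {p q : V} (h : R.G.Adj p q) : rank R.H R.prefH (R.Mstar U) (R.vu p q h) = 1 :=
  (rank_eq_of_mem (R.vu_mem_Mstar U h) fun _ => R.eq_vu_of_mem_Mstar U h).trans
    (R.pref_uu p q h)

theorem not_edgePlus_vu {p q : V} (h : R.G.Adj p q) {w : R.HV} (hw : R.H.Adj (R.vu p q h) w) :
    ¬ EdgePlus R.prefH (rank R.H R.prefH (R.Mstar U)) s(R.vu p q h, w) := by
  intro hplus
  have hlt := (edgePlus_iff.mp hplus).1
  rw [rank_vu] at hlt
  rcases R.eq_or_eq_of_adj_vu h hw with rfl | rfl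
  · have : R.pref (.u p q) (.u q p) < 1 := hlt
    rw [R.pref_uu p q h] at this
    omega
  · have : R.pref (.u p q) (.b p) < 1 := hlt
    rw [R.pref_ub p q h] at this
    omega

theorem pref_dd_ne {x y z : V} (ht : {x, y, z} ∈ R.T) (hxy : x ≠ y) (hxz : x ≠ z)
    (hyz : y ≠ z) : R.pref (.d x) (.d y) ≠ R.pref (.d x) (.d z) := by
  obtain ⟨a, b, c, hab, hbc, habc⟩ :=
    Finset.exists_lt_lt_eq_of_card_eq_three (R.ispvc.2.2.2.1 _ ht)
  obtain ⟨-, -, -, -, -, -, h1, h2, h3, h4, h5, h6⟩ := R.pref_tri _ ht a b c habc hab hbc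
  have hmem : ∀ v ∈ ({x, y, z} : Finset V), v = a ∨ v = b ∨ v = c := by simp [habc]
  rcases hmem x (by simp) with rfl | rfl | rfl <;> rcases hmem y (by simp) with rfl | rfl | rfl <;>
    rcases hmem z (by simp) with rfl | rfl | rfl <;> simp_all

theorem notMem_of_mem_P (hU : IsPVCSolution R.G R.P R.T U) {i j : V} (hij : s(i, j) ∈ R.P)
    (hi : i ∈ U) : j ∉ U := by
  intro hj
  have hne : i ≠ j := (R.ispvc.2.1 hij).ne
  obtain ⟨k, hk⟩ := Set.ncard_eq_one.mp (hU.2.1 _ hij)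
  have hik : i ∈ ({k} : Set V) := hk ▸ ⟨Sym2.mem_mk_left i j, hi⟩
  have hjk : j ∈ ({k} : Set V) := hk ▸ ⟨Sym2.mem_mk_right i j, hj⟩
  exact hne (hik.trans hjk.symm)

theorem va_vb_mem_Mstar (hU : IsPVCSolution R.G R.P R.T U) {i : V} (hi : i ∈ U) :
    s(R.va i, R.vb i) ∈ R.Mstar U := by
  rcases R.ispvc.2.2.2.2.2.2.1 i with ⟨e, he, hie⟩ | ⟨t, ht, hit⟩
  · obtain ⟨j, rfl⟩ : ∃ j, e = s(i, j) := ⟨Sym2.Mem.other hie, (Sym2.other_spec hie).symm⟩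
    have he' : s(j, i) ∈ R.P := Sym2.eq_swap ▸ he
    exact Or.inr (Or.inl ⟨j, i, he', he, R.notMem_of_mem_P U hU he hi, hi,
      Or.inr (Or.inr (Or.inl rfl))⟩)
  · obtain ⟨x, y, z, rfl, hx, hy, hz, hyz⟩ :=
      Finset.exists_eq_triple_of_ncard_inter_eq_two (R.ispvc.2.2.2.1 _ ht) (hU.2.2 _ ht)
    have hxy : x ≠ y := fun h => hx (h ▸ hy)
    have hxz : x ≠ z := fun h => hx (h ▸ hz)
    have hiyz : i = y ∨ i = z := by
      simp only [Finset.mem_insert, Finset.mem_singleton] at hit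
      exact hit.resolve_left fun h => hx (h ▸ hi)
    rcases lt_or_gt_of_ne (R.pref_dd_ne ht hxy hxz hyz) with hlt | hlt
    · refine Or.inr (Or.inr ⟨_, ht, x, y, z, rfl, hx, hy, hz, hyz, hlt, ?_⟩)
      rcases hiyz with rfl | rfl <;> simp
    · refine Or.inr (Or.inr ⟨_, ht, x, z, y, by rw [Finset.pair_comm], hx, hz, hy, hyz.symm,
        hlt, ?_⟩)
      rcases hiyz with rfl | rfl <;> simp

theorem eq_va_of_mem_Mstar {i : V} (hi : i ∈ U) {w : R.HV}
    (hw : s(R.vb i, w) ∈ R.Mstar U) : w = R.va i := by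
  simp only [Mstar, vu, va, vd, vb, vc, vf, exists_and_left, ↓existsAndEq, ne_eq, true_and,
    Set.mem_ofPred_eq, Sym2.eq, Sym2.rel_iff', Prod.mk.injEq, Subtype.ext_iff, reduceCtorEq,
    false_and, Prod.swap_prod_mk, or_self, exists_false, Gad.b.injEq, or_false, false_or,
    exists_prop] at hw
  grind [va]

theorem rank_vb (hU : IsPVCSolution R.G R.P R.T U) {i : V} (hi : i ∈ U) :
    rank R.H R.prefH (R.Mstar U) (R.vb i) = 1 :=
  (rank_eq_of_mem (Sym2.eq_swap ▸ R.va_vb_mem_Mstar U hU hi) fun _ =>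
    R.eq_va_of_mem_Mstar U hi).trans (R.pref_ba i)

theorem not_GMgraph_adj_vb_vu (hU : IsPVCSolution R.G R.P R.T U) {p q : V} (h : R.G.Adj p q)
    (hp : p ∈ U) : ¬ (GMgraph R.H R.prefH (R.Mstar U)).Adj (R.vb p) (R.vu p q h) := by
  rintro ⟨-, hM | hminus⟩
  · rw [Sym2.eq_swap] at hM
    exact absurd (R.eq_vu_of_mem_Mstar U h hM) (by simp [vb, vu, Subtype.ext_iff])
  · refine hminus ⟨R.vb p, R.vu p q h, rfl, ?_, ?_⟩
    · rw [R.rank_vb U hU hp]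
      exact ((R.pref_bu p).mapsTo ⟨q, h, rfl⟩).1
    · rw [R.rank_vu U h]
      change 1 < R.pref (.u p q) (.b p)
      rw [R.pref_ub p q h]
      omega

theorem notMem_and_partner_mem_support (hU : IsPVCSolution R.G R.P R.T U) {x y : R.HV}
    {S : (GMgraph R.H R.prefH (R.Mstar U)).Walk x y} (hS : S.IsPath) {p q : V}
    (h : R.G.Adj p q) (hv : R.vu p q h ∈ S.support) (hx : R.vu p q h ≠ x)
    (hy : R.vu p q h ≠ y) : p ∉ U ∧ R.vu q p h.symm ∈ S.support := by
  obtain ⟨w₁, w₂, hne, h₁, h₂, hw₁, hw₂⟩ := hS.exists_adj_adj_of_ne hv hx hy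
  rcases R.eq_or_eq_of_adj_vu h h₁.1 with rfl | rfl <;>
    rcases R.eq_or_eq_of_adj_vu h h₂.1 with rfl | rfl
  · exact absurd rfl hne
  · exact ⟨fun hp => R.not_GMgraph_adj_vb_vu U hU h hp h₂.symm, hw₁⟩
  · exact ⟨fun hp => R.not_GMgraph_adj_vb_vu U hU h hp h₁.symm, hw₂⟩
  · exact absurd rfl hne

theorem vu_ne_start {x y : R.HV} {S : (GMgraph R.H R.prefH (R.Mstar U)).Walk x y}
    (hS : IsShortestTwoPlusAltPath (R.Mstar U) R.prefH (rank R.H R.prefH (R.Mstar U)) S)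
    {p q : V} (h : R.G.Adj p q) : R.vu p q h ≠ x := by
  rintro rfl
  obtain ⟨w₁, w₂, h₁, h₂, hM, hplus⟩ :=
    hS.exists_edgePlus_of_matched ⟨_, R.vu_mem_Mstar U h⟩
  obtain rfl := R.eq_vu_of_mem_Mstar U h hM
  rcases hplus with hplus | hplus
  exacts [R.not_edgePlus_vu U h h₁.1 hplus, R.not_edgePlus_vu U h.symm h₂.1 hplus]

end Reduction

/-- A shortest alternating path in `H_{M*}` containing at least two edges labeled `+2`
does not pass through any vertex `u^e_i`. -/
theorem shortest_bad_alt_path_avoids_u {V : Type u} [LinearOrder V] (R : Reduction V)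
    (U : Set V) (hU : IsPVCSolution R.G R.P R.T U) (x y : R.HV)
    (S : (GMgraph R.H R.prefH (R.Mstar U)).Walk x y)
    (hS : IsAltPath (R.Mstar U) S)
    (hS2 : TwoPlusEdges R.prefH (rank R.H R.prefH (R.Mstar U)) S.edges)
    (hmin : ∀ (x' y' : R.HV) (S' : (GMgraph R.H R.prefH (R.Mstar U)).Walk x' y'),
      IsAltPath (R.Mstar U) S' →
      TwoPlusEdges R.prefH (rank R.H R.prefH (R.Mstar U)) S'.edges →
      S.length ≤ S'.length) :
    ∀ v ∈ S.support, ∀ i j : V, v.1 ≠ Gad.u i j := by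
  rintro ⟨_, hij⟩ hv i j rfl
  change R.vu i j hij ∈ S.support at hv
  have hshort : IsShortestTwoPlusAltPath (R.Mstar U) R.prefH _ S := ⟨hS, hS2, hmin⟩
  have hends {p q : V} (h : R.G.Adj p q) : R.vu p q h ≠ x ∧ R.vu p q h ≠ y :=
    ⟨R.vu_ne_start U hshort h, R.vu_ne_start U hshort.reverse h⟩
  obtain ⟨hi, hji⟩ :=
    R.notMem_and_partner_mem_support U hU hS.1 hij hv (hends hij).1 (hends hij).2
  obtain ⟨hj, -⟩ := R.notMem_and_partner_mem_support U hU hS.1 hij.symm hji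
    (hends hij.symm).1 (hends hij.symm).2
  exact (hU.1 hij).elim hi hj
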